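/- Let q ≥ 2 be an integer and let f be a real-valued q-additive function such that both series ∑_{j≥0} ∑_{d=1}^{q-1} f(d·q^j) and ∑_{j≥0} ∑_{d=1}^{q-1} f(d·q^j)² converge. Then (1/N) ∑_{n<N} |f(n)| = O(1) as N → ∞; that is, there exists a constant C (depending on f) such that ∑_{n<N} |f(n)| ≤ C·N for all N ≥ 1. -/

import Mathlib

/-!
Writing `n < q ^ (K + 1)` as `d * q ^ K + m` with `d < q` and `m < q ^ K` gives
`f n = f (d * q ^ K) + f m`, so the first and second moments of `f` over `[0, q ^ K)` obey
simple recursions in `K`: the mean is `σ_K / q` and the mean square is at most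
`(σ_K ^ 2 + q T_K) / q ^ 2`, where `σ_K` and `T_K` are the partial sums of the two series.
Both are bounded because the series converge, so Cauchy–Schwarz bounds the first absolute
moment over `[0, q ^ K)`, and comparing `N` with the next power of `q` costs only a factor `q`.
-/

open Filter Finset Topology

/-- `f : ℕ → ℝ` is `q`-additive. -/
def IsQAdditive (q : ℕ) (f : ℕ → ℝ) : Prop :=
  ∀ n : ℕ, f n = ∑ j ∈ Finset.range n, f (n / q ^ j % q * q ^ j)

theorem Finset.sum_range_mul_eq_sum_sum {M : Type*} [AddCommMonoid M] (g : ℕ → M) (a b : ℕ) :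
    ∑ n ∈ range (a * b), g n = ∑ d ∈ range a, ∑ m ∈ range b, g (d * b + m) := by
  induction a with
  | zero => simp
  | succ a ih => rw [Nat.succ_mul, sum_range_add, ih, sum_range_succ]

theorem sum_range_le_mul_of_sum_range_pow_succ_le {q : ℕ} (hq : 1 < q) {u : ℕ → ℝ}
    (hu : ∀ n, 0 ≤ u n) {c : ℝ} (hc : ∀ L, ∑ n ∈ range (q ^ (L + 1)), u n ≤ q ^ L * c)
    {N : ℕ} (hN : N ≠ 0) : ∑ n ∈ range N, u n ≤ c * N := by
  set L := Nat.log q N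
  have hc0 : 0 ≤ c := by
    have := (sum_nonneg fun n _ => hu n).trans (hc L)
    exact nonneg_of_mul_nonneg_right this (by positivity)
  calc ∑ n ∈ range N, u n ≤ ∑ n ∈ range (q ^ (L + 1)), u n :=
        sum_le_sum_of_subset_of_nonneg (range_subset_range.2 (Nat.lt_pow_succ_log_self hq N).le)
          fun n _ _ => hu n
    _ ≤ q ^ L * c := hc L
    _ ≤ N * c := by
        gcongr
        exact_mod_cast Nat.pow_log_le_self q hN
    _ = c * N := mul_comm _ _

namespace IsQAdditive

variable {q : ℕ} {f : ℕ → ℝ}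

theorem map_zero (hf : IsQAdditive q f) : f 0 = 0 := by simpa using hf 0

theorem eq_sum_range_of_lt_pow (hq : 1 < q) (hf : IsQAdditive q f) {K n : ℕ} (hn : n < q ^ K) :
    f n = ∑ j ∈ range K, f (n / q ^ j % q * q ^ j) := by
  have vanish : ∀ j ≥ min n K, f (n / q ^ j % q * q ^ j) = 0 := by
    intro j hj
    have : n < q ^ j := by
      rcases le_total n K with h | h
      · exact (Nat.lt_pow_self hq).trans_le (Nat.pow_le_pow_right (by omega) (by omega))
      · exact hn.trans_le (Nat.pow_le_pow_right (by omega) (by omega))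
    simpa [Nat.div_eq_of_lt this] using hf.map_zero
  rw [hf n, eventually_constant_sum vanish (min_le_left n K),
    eventually_constant_sum vanish (min_le_right n K)]

theorem add_of_lt_pow (hq : 1 < q) (hf : IsQAdditive q f) {K d m : ℕ} (hd : d < q)
    (hm : m < q ^ K) : f (d * q ^ K + m) = f (d * q ^ K) + f m := by
  have hq0 : 0 < q := by omega
  have hlt : d * q ^ K + m < q ^ (K + 1) := by
    calc d * q ^ K + m < (d + 1) * q ^ K := by linarith
    _ ≤ q * q ^ K := Nat.mul_le_mul_right _ hd
    _ = q ^ (K + 1) := by ring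
  have top_digit : (d * q ^ K + m) / q ^ K % q = d := by
    rw [add_comm, Nat.add_mul_div_right _ _ (by positivity), Nat.div_eq_of_lt hm, zero_add,
      Nat.mod_eq_of_lt hd]
  have low_digits : ∀ j < K, (d * q ^ K + m) / q ^ j % q = m / q ^ j % q := by
    intro j hj
    obtain ⟨i, rfl⟩ : ∃ i, K = j + 1 + i := ⟨K - j - 1, by omega⟩
    rw [show d * q ^ (j + 1 + i) = d * q ^ i * q * q ^ j by ring, add_comm,
      Nat.add_mul_div_right _ _ (by positivity), Nat.add_mul_mod_self_right]
  rw [hf.eq_sum_range_of_lt_pow hq hlt, sum_range_succ, top_digit, add_comm,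
    hf.eq_sum_range_of_lt_pow hq hm]
  congr 1
  exact sum_congr rfl fun j hj => by rw [low_digits j (mem_range.1 hj)]

theorem sum_comp_range_pow_succ (hq : 1 < q) (hf : IsQAdditive q f) (g : ℝ → ℝ) (K : ℕ) :
    ∑ n ∈ range (q ^ (K + 1)), g (f n)
      = ∑ d ∈ range q, ∑ m ∈ range (q ^ K), g (f (d * q ^ K) + f m) := by
  rw [pow_succ', sum_range_mul_eq_sum_sum]
  refine sum_congr rfl fun d hd => sum_congr rfl fun m hm => ?_
  rw [hf.add_of_lt_pow hq (mem_range.1 hd) (mem_range.1 hm)]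

theorem mul_sum_range_pow (hq : 1 < q) (hf : IsQAdditive q f) (K : ℕ) :
    q * ∑ n ∈ range (q ^ K), f n
      = q ^ K * ∑ j ∈ range K, ∑ d ∈ range q, f (d * q ^ j) := by
  induction K with
  | zero => simp [hf.map_zero]
  | succ K ih =>
    have step : ∑ n ∈ range (q ^ (K + 1)), f n
        = q ^ K * ∑ d ∈ range q, f (d * q ^ K) + q * ∑ n ∈ range (q ^ K), f n := by
      simpa [sum_add_distrib, mul_sum] using hf.sum_comp_range_pow_succ hq id K
    rw [step, sum_range_succ]
    linear_combination q * ih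

theorem sq_mul_sum_sq_range_pow_le (hq : 1 < q) (hf : IsQAdditive q f) (K : ℕ) :
    q ^ 2 * ∑ n ∈ range (q ^ K), f n ^ 2
      ≤ q ^ K * ((∑ j ∈ range K, ∑ d ∈ range q, f (d * q ^ j)) ^ 2
        + q * ∑ j ∈ range K, ∑ d ∈ range q, f (d * q ^ j) ^ 2) := by
  induction K with
  | zero => simp [hf.map_zero]
  | succ K ih =>
    have step : ∑ n ∈ range (q ^ (K + 1)), f n ^ 2
        = q ^ K * ∑ d ∈ range q, f (d * q ^ K) ^ 2
          + 2 * (∑ d ∈ range q, f (d * q ^ K)) * ∑ n ∈ range (q ^ K), f n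
          + q * ∑ n ∈ range (q ^ K), f n ^ 2 := by
      simp only [hf.sum_comp_range_pow_succ hq (· ^ 2) K, add_sq, sum_add_distrib, sum_const,
        card_range, nsmul_eq_mul, ← mul_sum, ← sum_mul]
      push_cast
      ring
    rw [step, sum_range_succ, sum_range_succ]
    linear_combination (q : ℝ) * ih
      + 2 * q * (∑ d ∈ range q, f (d * q ^ K)) * hf.mul_sum_range_pow hq K
      + q ^ (K + 1) * sq_nonneg (∑ d ∈ range q, f (d * q ^ K))

theorem sum_abs_range_pow_succ_le (hq : 1 < q) (hf : IsQAdditive q f) {M : ℝ}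
    (hM : ∀ K, (∑ j ∈ range K, ∑ d ∈ range q, f (d * q ^ j)) ^ 2
      + q * ∑ j ∈ range K, ∑ d ∈ range q, f (d * q ^ j) ^ 2 ≤ M) (L : ℕ) :
    ∑ n ∈ range (q ^ (L + 1)), |f n| ≤ q ^ L * √M := by
  have hM0 : 0 ≤ M := by simpa using hM 0
  have second_moment : q ^ 2 * ∑ n ∈ range (q ^ (L + 1)), f n ^ 2 ≤ q ^ (L + 1) * M :=
    (hf.sq_mul_sum_sq_range_pow_le hq (L + 1)).trans (by gcongr; exact hM _)
  have cauchy_schwarz : (∑ n ∈ range (q ^ (L + 1)), |f n|) ^ 2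
      ≤ q ^ (L + 1) * ∑ n ∈ range (q ^ (L + 1)), f n ^ 2 := by
    simpa using sq_sum_le_card_mul_sum_sq (s := range (q ^ (L + 1))) (f := fun n => |f n|)
  refine (pow_le_pow_iff_left₀ (sum_nonneg fun n _ => abs_nonneg _) (by positivity)
    two_ne_zero).1 (le_of_mul_le_mul_left ?_ (by positivity : (0 : ℝ) < q ^ 2))
  calc (q : ℝ) ^ 2 * (∑ n ∈ range (q ^ (L + 1)), |f n|) ^ 2
      ≤ q ^ (L + 1) * (q ^ 2 * ∑ n ∈ range (q ^ (L + 1)), f n ^ 2) := by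
        rw [mul_left_comm]
        gcongr
    _ ≤ q ^ (L + 1) * (q ^ (L + 1) * M) := by gcongr
    _ = q ^ 2 * (q ^ L * √M) ^ 2 := by rw [mul_pow, Real.sq_sqrt hM0]; ring

end IsQAdditive

/-- If the two series `∑_j ∑_{d=1}^{q-1} f(d q^j)` and `∑_j ∑_{d=1}^{q-1} f(d q^j)²`
converge, then `(1/N) ∑_{n<N} |f(n)| = O(1)`. -/
theorem q_ary_first_abs_moment_bounded (q : ℕ) (hq : 2 ≤ q) (f : ℕ → ℝ)
    (hf : IsQAdditive q f)
    (hS : ∃ S : ℝ, Tendsto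
      (fun J : ℕ => ∑ j ∈ Finset.range J, ∑ d ∈ Finset.Ico 1 q, f (d * q ^ j))
      atTop (𝓝 S))
    (hS2 : ∃ S2 : ℝ, Tendsto
      (fun J : ℕ => ∑ j ∈ Finset.range J, ∑ d ∈ Finset.Ico 1 q, f (d * q ^ j) ^ 2)
      atTop (𝓝 S2)) :
    ∃ C : ℝ, ∀ N : ℕ, 1 ≤ N → ∑ n ∈ Finset.range N, |f n| ≤ C * N := by
  obtain ⟨S, hS⟩ := hS
  obtain ⟨S2, hS2⟩ := hS2
  obtain ⟨C, hC⟩ := (hS.pow 2).bddAbove_range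
  have hT : ∀ K, ∑ j ∈ range K, ∑ d ∈ Ico 1 q, f (d * q ^ j) ^ 2 ≤ S2 :=
    (monotone_nat_of_le_succ fun K => by
      simpa [sum_range_succ] using sum_nonneg fun d _ => sq_nonneg (f (d * q ^ K))
    ).ge_of_tendsto hS2
  have hM : ∀ K, (∑ j ∈ range K, ∑ d ∈ range q, f (d * q ^ j)) ^ 2
      + q * ∑ j ∈ range K, ∑ d ∈ range q, f (d * q ^ j) ^ 2 ≤ C + q * S2 := by
    intro K
    have hq0 : 0 < q := by omega
    simp only [sum_range_eq_add_Ico _ hq0, zero_mul, hf.map_zero, zero_add,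
      zero_pow two_ne_zero]
    gcongr
    exacts [hC ⟨K, rfl⟩, hT K]
  exact ⟨√(C + q * S2), fun N hN => sum_range_le_mul_of_sum_range_pow_succ_le hq
    (fun n => abs_nonneg (f n)) (hf.sum_abs_range_pow_succ_le hq hM) (by omega)⟩
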